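/- Let r and g be positive integers and let z, w, λ : Fin g → ℂ satisfy w i = λ i * z i for all i. Suppose N is the least positive integer m such that r·m is even and either (w i)^m = −1 for all i or (w i)^m = 1 for all i, and that moreover (w i)^N = 1 for all i. Let T be a positive integer with (λ i)^T = 1 for all i, and assume either padicValNat 2 T < padicValNat 2 N, or padicValNat 2 T = padicValNat 2 N = 0. Let M be the least positive integer m such that r·m is even and either (z i)^m = −1 for all i or (z i)^m = 1 for all i. Then (z i)^M = 1 for all i. -/

import Mathlib

/-!
Suppose `z i ^ M = -1` for all `i`, and write `v = padicValNat 2`. If `x ^ m = -1` and `x ^ L = 1`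
then `v m < v L`. Since `w i ^ T = z i ^ T`, an exponent divisible by `T` that kills one of `z i`,
`w i` kills the other; with `L = lcm T N` this gives `v M < max (v T) (v N)`, which is already
impossible if `v T = v N = 0`. If `v T < v N`, write `N = 2n`;
comparing `v M` with `v n` shows that either `w i ^ n = 1` for all `i` (when `v M < v n`) or
`w i ^ n = -1` for all `i` (when `v M = v n`), and in both cases `r * n` is even, contradicting the
minimality of `N`.
-/

lemma padicValNat_le_of_dvd {p d n : ℕ} [Fact p.Prime] (hn : n ≠ 0) (h : d ∣ n) :
    padicValNat p d ≤ padicValNat p n :=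
  (padicValNat_dvd_iff_le hn).mp (pow_padicValNat_dvd.trans h)

lemma padicValNat_prime_mul {p n : ℕ} [hp : Fact p.Prime] (hn : n ≠ 0) :
    padicValNat p (p * n) = padicValNat p n + 1 := by
  rw [padicValNat.mul hp.out.ne_zero hn, padicValNat_self, add_comm]

lemma padicValNat_lcm {p a b : ℕ} [hp : Fact p.Prime] (ha : a ≠ 0) (hb : b ≠ 0) :
    padicValNat p (a.lcm b) = max (padicValNat p a) (padicValNat p b) := by
  simp only [← Nat.factorization_def _ hp.out, Nat.factorization_lcm ha hb, Finsupp.sup_apply]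

lemma even_iff_padicValNat_two_pos {n : ℕ} (hn : n ≠ 0) : Even n ↔ 0 < padicValNat 2 n :=
  even_iff_two_dvd.trans ⟨one_le_padicValNat_of_dvd hn, dvd_of_one_le_padicValNat⟩

lemma dvd_of_dvd_prime_mul {p d m : ℕ} [hp : Fact p.Prime] (hm : m ≠ 0) (hd : d ∣ p * m)
    (hv : padicValNat p d ≤ padicValNat p m) : d ∣ m := by
  have hpm : p * m ≠ 0 := mul_ne_zero hp.out.ne_zero hm
  have hd0 : d ≠ 0 := ne_zero_of_dvd_ne_zero hpm hd
  refine (Nat.factorization_prime_le_iff_dvd hd0 hm).mp fun q hq => ?_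
  obtain rfl | hqp := eq_or_ne q p
  · simpa only [Nat.factorization_def _ hq] using hv
  · calc d.factorization q ≤ (p * m).factorization q :=
          (Nat.factorization_prime_le_iff_dvd hd0 hpm).mpr hd q hq
      _ = m.factorization q := by
          simp [Nat.factorization_mul hp.out.ne_zero hm, hp.out.factorization, hqp.symm]

section Monoid

variable {R : Type*} [Monoid R] [HasDistribNeg R]

lemma pow_two_mul_eq_one_of_pow_eq_neg_one {x : R} {m : ℕ} (h : x ^ m = -1) :
    x ^ (2 * m) = 1 := by
  rw [pow_mul', h, neg_one_sq]

/-- An element with `x ^ m = -1` has order exactly divisible by `2 ^ (v₂ m + 1)`. -/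
lemma padicValNat_two_lt_of_pow_eq_neg_one (hR : (-1 : R) ≠ 1) {x : R} {m n : ℕ} (hn : n ≠ 0)
    (hxm : x ^ m = -1) (hxn : x ^ n = 1) : padicValNat 2 m < padicValNat 2 n := by
  have hm : m ≠ 0 := by
    rintro rfl
    exact hR (hxm.symm.trans (pow_zero x))
  by_contra! hle
  have hgcd : n.gcd (2 * m) ∣ m :=
    dvd_of_dvd_prime_mul hm (Nat.gcd_dvd_right _ _)
      ((padicValNat_le_of_dvd hn (Nat.gcd_dvd_left _ _)).trans hle)
  obtain ⟨k, hk⟩ := hgcd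
  apply hR
  rw [← hxm, hk, pow_mul, pow_gcd_eq_one.mpr ⟨hxn, pow_two_mul_eq_one_of_pow_eq_neg_one hxm⟩,
    one_pow]

lemma padicValNat_two_lt_max_of_pow_eq_pow (hR : (-1 : R) ≠ 1) {x y : R} {T m n : ℕ}
    (hT : T ≠ 0) (hn : n ≠ 0) (hxy : x ^ T = y ^ T) (hxm : x ^ m = -1) (hyn : y ^ n = 1) :
    padicValNat 2 m < max (padicValNat 2 T) (padicValNat 2 n) := by
  rw [← padicValNat_lcm hT hn]
  refine padicValNat_two_lt_of_pow_eq_neg_one hR (Nat.lcm_ne_zero hT hn) hxm ?_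
  obtain ⟨k, hk⟩ := Nat.dvd_lcm_left T n
  obtain ⟨k', hk'⟩ := Nat.dvd_lcm_right T n
  rw [hk, pow_mul, hxy, ← pow_mul, ← hk, hk', pow_mul, hyn, one_pow]

end Monoid

lemma even_mul_and_pow_eq_neg_one_or_one {ι R : Type*} [Nonempty ι] [Ring R] [NoZeroDivisors R]
    (hR : (-1 : R) ≠ 1) {z w : ι → R} {r T M n : ℕ} (hT : T ≠ 0) (hM : M ≠ 0) (hn : n ≠ 0)
    (hwz : ∀ i, w i ^ T = z i ^ T) (hTn : padicValNat 2 T ≤ padicValNat 2 n)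
    (hz : ∀ i, z i ^ M = -1) (hw : ∀ i, w i ^ (2 * n) = 1) (hrM : Even (r * M)) :
    Even (r * n) ∧ ((∀ i, w i ^ n = -1) ∨ ∀ i, w i ^ n = 1) := by
  obtain ⟨i₀⟩ := ‹Nonempty ι›
  have hMn : padicValNat 2 M ≤ padicValNat 2 n := by
    have := padicValNat_two_lt_max_of_pow_eq_pow hR hT (mul_ne_zero two_ne_zero hn)
      (hwz i₀).symm (hz i₀) (hw i₀)
    rw [padicValNat_prime_mul hn] at this
    omega
  have hsq : ∀ i, w i ^ n = 1 ∨ w i ^ n = -1 := fun i =>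
    sq_eq_one_iff.mp (by rw [← pow_mul', hw i])
  rcases hMn.lt_or_eq with hlt | heq
  · refine ⟨Nat.even_mul.mpr (Or.inr ((even_iff_padicValNat_two_pos hn).mpr (by omega))),
      Or.inr fun i => (hsq i).resolve_right fun hwn => ?_⟩
    have := padicValNat_two_lt_max_of_pow_eq_pow hR hT (mul_ne_zero two_ne_zero hM) (hwz i) hwn
      (pow_two_mul_eq_one_of_pow_eq_neg_one (hz i))
    rw [padicValNat_prime_mul hM] at this
    omega
  · refine ⟨?_, Or.inl fun i => (hsq i).resolve_left fun hwn => ?_⟩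
    · rwa [Nat.even_mul, even_iff_padicValNat_two_pos hn, ← heq,
        ← even_iff_padicValNat_two_pos hM, ← Nat.even_mul]
    · have := padicValNat_two_lt_max_of_pow_eq_pow hR hT hn (hwz i).symm (hz i) hwn
      omega

theorem stmt4_general (r g : ℕ) (hg : 0 < g)
    (z w l : Fin g → ℂ) (hw : ∀ i, w i = l i * z i)
    (N : ℕ) (hN_pos : 0 < N)
    (hN_min : ∀ m : ℕ, 0 < m → Even (r * m) →
      ((∀ i, w i ^ m = -1) ∨ (∀ i, w i ^ m = 1)) → N ≤ m)
    (hN_par : ∀ i, w i ^ N = 1)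
    (T : ℕ) (hT_pos : 0 < T) (hT : ∀ i, (l i) ^ T = 1)
    (hT2 : padicValNat 2 T < padicValNat 2 N ∨
      (padicValNat 2 T = padicValNat 2 N ∧ padicValNat 2 N = 0))
    (M : ℕ) (hM_pos : 0 < M) (hM_even : Even (r * M))
    (hM_prop : (∀ i, z i ^ M = -1) ∨ (∀ i, z i ^ M = 1)) :
    ∀ i, z i ^ M = 1 := by
  have : Nonempty (Fin g) := ⟨⟨0, hg⟩⟩
  have hR : (-1 : ℂ) ≠ 1 := by norm_num
  have hwz : ∀ i, w i ^ T = z i ^ T := fun i => by rw [hw, mul_pow, hT, one_mul]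
  refine hM_prop.resolve_left fun hz => ?_
  rcases hT2 with hlt | ⟨hTN, hN0⟩
  · obtain ⟨n, rfl⟩ : 2 ∣ N := dvd_of_one_le_padicValNat (by omega)
    have hn : n ≠ 0 := by omega
    rw [padicValNat_prime_mul hn] at hlt
    obtain ⟨hrn, hwn⟩ := even_mul_and_pow_eq_neg_one_or_one hR hT_pos.ne' hM_pos.ne' hn hwz
      (by omega) hz hN_par hM_even
    have := hN_min n (by omega) hrn hwn
    omega
  · have := padicValNat_two_lt_max_of_pow_eq_pow hR hT_pos.ne' hN_pos.ne' (hwz ⟨0, hg⟩).symm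
      (hz _) (hN_par _)
    omega

/-- Corollary 4.11(2): if `A'/K` has period `N` and parity `-1` and `A/K` is a twist
of order `T` with `ord₂ T < ord₂ N` or `ord₂ T = ord₂ N = 0`, then `A/K` also has
parity `-1`. -/
theorem stmt4 (r g : ℕ) (hr : 0 < r) (hg : 0 < g)
    (z w l : Fin g → ℂ) (hw : ∀ i, w i = l i * z i)
    (N : ℕ) (hN_pos : 0 < N) (hN_even : Even (r * N))
    (hN_prop : (∀ i, w i ^ N = -1) ∨ (∀ i, w i ^ N = 1))
    (hN_min : ∀ m : ℕ, 0 < m → Even (r * m) →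
      ((∀ i, w i ^ m = -1) ∨ (∀ i, w i ^ m = 1)) → N ≤ m)
    (hN_par : ∀ i, w i ^ N = 1)
    (T : ℕ) (hT_pos : 0 < T) (hT : ∀ i, (l i) ^ T = 1)
    (hT2 : padicValNat 2 T < padicValNat 2 N ∨
      (padicValNat 2 T = padicValNat 2 N ∧ padicValNat 2 N = 0))
    (M : ℕ) (hM_pos : 0 < M) (hM_even : Even (r * M))
    (hM_prop : (∀ i, z i ^ M = -1) ∨ (∀ i, z i ^ M = 1))
    (hM_min : ∀ m : ℕ, 0 < m → Even (r * m) →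
      ((∀ i, z i ^ m = -1) ∨ (∀ i, z i ^ m = 1)) → M ≤ m) :
    ∀ i, z i ^ M = 1 :=
  stmt4_general r g hg z w l hw N hN_pos hN_min hN_par T hT_pos hT hT2 M hM_pos hM_even hM_prop
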